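/- Let F : ℂ² → ℂ² be a proper polynomial map with nonzero constant Jacobian determinant. If some fibre F⁻¹(v₀) consists of exactly one point, then F is bijective. -/

import Mathlib

open MvPolynomial

noncomputable def jacDet (P Q : MvPolynomial (Fin 2) ℂ) : MvPolynomial (Fin 2) ℂ :=
  pderiv 0 P * pderiv 1 Q - pderiv 1 P * pderiv 0 Q

open ContinuousLinearMap

noncomputable def pder (R : MvPolynomial (Fin 2) ℂ) (a : ℂ × ℂ) : ℂ × ℂ →L[ℂ] ℂ :=
  eval ![a.1, a.2] (pderiv 0 R) • ContinuousLinearMap.fst ℂ ℂ ℂ +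
  eval ![a.1, a.2] (pderiv 1 R) • ContinuousLinearMap.snd ℂ ℂ ℂ

lemma hasStrictFDerivAt_eval (R : MvPolynomial (Fin 2) ℂ) (a : ℂ × ℂ) :
    HasStrictFDerivAt (fun p : ℂ × ℂ => eval ![p.1, p.2] R) (pder R a) a := by
  induction R using MvPolynomial.induction_on with
  | C r =>
      have : (fun p : ℂ × ℂ => eval ![p.1, p.2] (C r : MvPolynomial (Fin 2) ℂ)) = fun _ => r := by
        funext p; simp
      rw [this]
      have h0 : pder (C r) a = 0 := by
        ext u <;> simp [pder]
      rw [h0]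
      exact hasStrictFDerivAt_const r a
  | add p q hp hq =>
      have : pder (p + q) a = pder p a + pder q a := by
        ext u <;> simp [pder] <;> ring
      rw [show (fun p1 : ℂ × ℂ => eval ![p1.1, p1.2] (p + q)) =
          (fun p1 : ℂ × ℂ => eval ![p1.1, p1.2] p + eval ![p1.1, p1.2] q) from by
        funext p1; simp, this]
      exact HasStrictFDerivAt.add hp hq
  | mul_X p i hp =>
      fin_cases i
      · show HasStrictFDerivAt (fun p1 : ℂ × ℂ => eval ![p1.1, p1.2] (p * X 0)) (pder (p * X 0) a) a
        have hfun : (fun p1 : ℂ × ℂ => eval ![p1.1, p1.2] (p * X 0)) =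
            (fun p1 : ℂ × ℂ => eval ![p1.1, p1.2] p * p1.1) := by
          funext p1; simp
        have := HasStrictFDerivAt.fun_mul hp (ContinuousLinearMap.fst ℂ ℂ ℂ).hasStrictFDerivAt
        rw [hfun]
        refine HasStrictFDerivAt.congr_fderiv this ?_
        ext u <;>
          simp [pder, pderiv_mul, Matrix.cons_val_zero, Matrix.cons_val_one] <;> ring
      · show HasStrictFDerivAt (fun p1 : ℂ × ℂ => eval ![p1.1, p1.2] (p * X 1)) (pder (p * X 1) a) a
        have hfun : (fun p1 : ℂ × ℂ => eval ![p1.1, p1.2] (p * X 1)) =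
            (fun p1 : ℂ × ℂ => eval ![p1.1, p1.2] p * p1.2) := by
          funext p1; simp
        have := HasStrictFDerivAt.fun_mul hp (ContinuousLinearMap.snd ℂ ℂ ℂ).hasStrictFDerivAt
        rw [hfun]
        refine HasStrictFDerivAt.congr_fderiv this ?_
        ext u <;>
          simp [pder, pderiv_mul] <;> ring

noncomputable def twoByTwo (a b d e : ℂ) : ℂ × ℂ →L[ℂ] ℂ × ℂ :=
  (a • ContinuousLinearMap.fst ℂ ℂ ℂ + b • ContinuousLinearMap.snd ℂ ℂ ℂ).prod
    (d • ContinuousLinearMap.fst ℂ ℂ ℂ + e • ContinuousLinearMap.snd ℂ ℂ ℂ)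

noncomputable def twoByTwoEquiv (a b d e c : ℂ) (hc : c ≠ 0) (h : a * e - b * d = c) :
    (ℂ × ℂ) ≃L[ℂ] (ℂ × ℂ) :=
  ContinuousLinearEquiv.equivOfInverse (twoByTwo a b d e)
    (twoByTwo (c⁻¹ * e) (-(c⁻¹ * b)) (-(c⁻¹ * d)) (c⁻¹ * a))
    (fun x => by
      refine Prod.ext ?_ ?_ <;> simp [twoByTwo]
      · linear_combination (c⁻¹ * x.1) * h + x.1 * inv_mul_cancel₀ hc
      · linear_combination (c⁻¹ * x.2) * h + x.2 * inv_mul_cancel₀ hc)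
    (fun x => by
      refine Prod.ext ?_ ?_ <;> simp [twoByTwo]
      · linear_combination (c⁻¹ * x.1) * h + x.1 * inv_mul_cancel₀ hc
      · linear_combination (c⁻¹ * x.2) * h + x.2 * inv_mul_cancel₀ hc)

lemma twoByTwoEquiv_coe (a b d e c : ℂ) (hc : c ≠ 0) (h : a * e - b * d = c) :
    ((twoByTwoEquiv a b d e c hc h : (ℂ × ℂ) ≃L[ℂ] ℂ × ℂ) : ℂ × ℂ →L[ℂ] ℂ × ℂ)
      = twoByTwo a b d e := rfl

theorem stmt_13 (P Q : MvPolynomial (Fin 2) ℂ) (c : ℂ) (hc : c ≠ 0)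
    (hjac : jacDet P Q = C c)
    (F : ℂ × ℂ → ℂ × ℂ)
    (hF : ∀ p : ℂ × ℂ, F p = (eval ![p.1, p.2] P, eval ![p.1, p.2] Q))
    (hproper : ∀ K : Set (ℂ × ℂ), IsCompact K → IsCompact (F ⁻¹' K))
    (v₀ b : ℂ × ℂ) (hfib : F ⁻¹' {v₀} = {b}) :
    Function.Bijective F := by
  have hFe : F = fun p : ℂ × ℂ => (eval ![p.1, p.2] P, eval ![p.1, p.2] Q) := funext hF
  -- determinant identity at each point
  have hdet : ∀ a : ℂ × ℂ,
      eval ![a.1, a.2] (pderiv 0 P) * eval ![a.1, a.2] (pderiv 1 Q) -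
        eval ![a.1, a.2] (pderiv 1 P) * eval ![a.1, a.2] (pderiv 0 Q) = c := by
    intro a
    have := congrArg (eval ![a.1, a.2]) hjac
    simpa [jacDet] using this
  -- invertible strict derivative at each point
  have hsd : ∀ a : ℂ × ℂ,
      HasStrictFDerivAt F
        (↑(twoByTwoEquiv (eval ![a.1, a.2] (pderiv 0 P)) (eval ![a.1, a.2] (pderiv 1 P))
            (eval ![a.1, a.2] (pderiv 0 Q)) (eval ![a.1, a.2] (pderiv 1 Q)) c hc (hdet a)) :
          ℂ × ℂ →L[ℂ] ℂ × ℂ) a := by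
    intro a
    rw [twoByTwoEquiv_coe, hFe]
    exact HasStrictFDerivAt.prodMk (hasStrictFDerivAt_eval P a) (hasStrictFDerivAt_eval Q a)
  have hloc : IsLocalHomeomorph F := fun a =>
    ⟨HasStrictFDerivAt.toOpenPartialHomeomorph F (hsd a), HasStrictFDerivAt.mem_toOpenPartialHomeomorph_source (hsd a),
      (HasStrictFDerivAt.toOpenPartialHomeomorph_coe (hsd a)).symm⟩
  have hcont : Continuous F := hloc.continuous
  have hopen : IsOpenMap F := hloc.isOpenMap
  have hclosed : IsClosedMap F :=
    (isProperMap_iff_isCompact_preimage.mpr ⟨hcont, fun K hK => hproper K hK⟩).isClosedMap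
  -- surjectivity
  have hsurj : Function.Surjective F := by
    rw [← Set.range_eq_univ]
    refine IsClopen.eq_univ ⟨?_, hopen.isOpen_range⟩ ⟨F b, Set.mem_range_self b⟩
    simpa using hclosed Set.univ isClosed_univ
  -- the set of points with subsingleton fibre is clopen
  set B : Set (ℂ × ℂ) := {w | Set.Subsingleton (F ⁻¹' {w})} with hB
  have hBopen : IsOpen B := by
    rw [isOpen_iff_forall_mem_open]
    intro w hw
    obtain ⟨x, hx⟩ := hsurj w
    obtain ⟨e, hxe, hFee⟩ := hloc x
    have hinj : Set.InjOn F e.source := by rw [hFee]; exact e.injOn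
    refine ⟨(F '' e.sourceᶜ)ᶜ, ?_, (hclosed _ e.open_source.isClosed_compl).isOpen_compl, ?_⟩
    · intro w' hw' y hy z hz
      simp only [Set.mem_preimage, Set.mem_singleton_iff] at hy hz
      have hyU : y ∈ e.source := by
        by_contra h
        exact hw' ⟨y, h, hy⟩
      have hzU : z ∈ e.source := by
        by_contra h
        exact hw' ⟨z, h, hz⟩
      exact hinj hyU hzU (hy.trans hz.symm)
    · rintro ⟨y, hy, hFy⟩
      have : y ∈ F ⁻¹' {w} := hFy
      have hx' : x ∈ F ⁻¹' {w} := hx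
      exact hy (hw this hx' ▸ hxe)
  have hBc : IsOpen Bᶜ := by
    rw [isOpen_iff_forall_mem_open]
    intro w hw
    simp only [Set.mem_compl_iff, hB, Set.mem_setOf_eq, Set.not_subsingleton_iff] at hw
    obtain ⟨x, hx, y, hy, hxy⟩ := hw
    simp only [Set.mem_preimage, Set.mem_singleton_iff] at hx hy
    obtain ⟨U, U', hUo, hU'o, hxU, hyU', hdisj⟩ := t2_separation hxy
    refine ⟨F '' U ∩ F '' U', ?_, (hopen U hUo).inter (hopen U' hU'o), ?_⟩
    · rintro w' ⟨⟨p, hp, hFp⟩, ⟨q, hq, hFq⟩⟩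
      simp only [Set.mem_compl_iff, hB, Set.mem_setOf_eq, Set.not_subsingleton_iff]
      have hpq : p ≠ q := fun h => Set.disjoint_left.mp hdisj hp (h ▸ hq)
      exact ⟨p, by simp [hFp], q, by simp [hFq], hpq⟩
    · exact ⟨⟨x, hxU, hx⟩, ⟨y, hyU', hy⟩⟩
  have hBuniv : B = Set.univ :=
    IsClopen.eq_univ ⟨isOpen_compl_iff.mp hBc, hBopen⟩
      ⟨v₀, by simp only [hB, Set.mem_setOf_eq, hfib]; exact Set.subsingleton_singleton⟩
  refine ⟨fun p q hpq => ?_, hsurj⟩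
  have hwB : F q ∈ B := hBuniv ▸ Set.mem_univ _
  exact hwB (by simp [hpq]) (by simp)
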